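/- (Monotone quotient implies the τ-condition.) Let f : ℝ → ℝ be differentiable, let F(x) = ∫₀ˣ f(s) ds and τ(x) = f(x) x − 2 F(x). If M > 0 and the function x ↦ f(x)/x is nondecreasing on [M, ∞), then τ is nondecreasing on [M, ∞), i.e., τ(x) ≤ τ(y) whenever M ≤ x ≤ y. -/
import Mathlib


theorem stmt_7 (f : ℝ → ℝ) (hf : Continuous f) (F τ : ℝ → ℝ)
    (hF : ∀ x, F x = ∫ s in (0:ℝ)..x, f s)
    (hτ : ∀ x, τ x = f x * x - 2 * F x)
    (M : ℝ) (hM : 0 < M)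
    (hmono : ∀ x y, M ≤ x → x ≤ y → f x / x ≤ f y / y) :
    ∀ x y, M ≤ x → x ≤ y → τ x ≤ τ y := by
  intro x y hMx hxy
  have hx0 : 0 < x := lt_of_lt_of_le hM hMx
  have hy0 : 0 < y := lt_of_lt_of_le hx0 hxy
  have hFdiff : F y - F x = ∫ s in x..y, f s := by
    rw [hF, hF, ← intervalIntegral.integral_interval_sub_left (hf.intervalIntegrable 0 y)
      (hf.intervalIntegrable 0 x)]
  have hac : f x / x ≤ f y / y := hmono x y hMx hxy
  -- pointwise bound: f s ≤ (f y / y) * s on [x,y]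
  have hbound : ∫ s in x..y, f s ≤ ∫ s in x..y, (f y / y) * s := by
    apply intervalIntegral.integral_mono_on hxy (hf.intervalIntegrable x y)
      (((continuous_const.mul continuous_id).intervalIntegrable x y))
    intro s hs
    have hs0 : 0 < s := lt_of_lt_of_le hx0 hs.1
    have h1 : f s / s ≤ f y / y := hmono s y (le_trans hMx hs.1) hs.2
    have := mul_le_mul_of_nonneg_right h1 hs0.le
    calc f s = (f s / s) * s := by field_simp
      _ ≤ (f y / y) * s := this
  have hval : ∫ s in x..y, (f y / y) * s = (f y / y) * ((y^2 - x^2)/2) := by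
    rw [intervalIntegral.integral_const_mul]
    have : ∫ s in x..y, s = (y^2 - x^2)/2 := by
      simp [integral_id]
    rw [this]
  have hfx : f x = (f x / x) * x := by field_simp
  have hfy : f y = (f y / y) * y := by field_simp
  have hI : ∫ s in x..y, f s ≤ (f y / y) * ((y^2 - x^2)/2) := hval ▸ hbound
  rw [hτ, hτ]
  nlinarith [sq_nonneg x, mul_le_mul_of_nonneg_right hac (sq_nonneg x)]
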